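/- Define the log-evidence L(α, β; F, y) as in the Bayesian linear model: L = (n/2)log β + (D/2)log α - (n/2)log 2π - (β/2)‖Fm - y‖₂² - (α/2)mᵀm - (1/2)log det(A), with A = αI + βFᵀF, m = βA⁻¹Fᵀy. If F̃ = [F, ..., F] ∈ ℝ^{n×qD} consists of q copies of F, then L(qα, β; F̃, y) = L(α, β; F, y) for all α, β > 0. -/

import Mathlib

open Matrix

lemma aux_posDef {ι κ : Type*} [Fintype ι] [Fintype κ] [DecidableEq κ]
    (F : Matrix ι κ ℝ) {α β : ℝ} (hα : 0 < α) (hβ : 0 < β) :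
    (α • (1 : Matrix κ κ ℝ) + β • (Fᵀ * F)).PosDef := by
  refine Matrix.PosDef.of_dotProduct_mulVec_pos ?_ ?_
  · unfold Matrix.IsHermitian
    ext i j
    simp [Matrix.conjTranspose_apply, Matrix.one_apply, Matrix.mul_apply, mul_comm, eq_comm]
  · intro x hx
    have h1 : (α • (1 : Matrix κ κ ℝ) + β • (Fᵀ * F)) *ᵥ x
        = α • x + β • (Fᵀ *ᵥ (F *ᵥ x)) := by
      simp [Matrix.add_mulVec, Matrix.smul_mulVec, Matrix.mulVec_mulVec]
    rw [h1]
    have h2 : x ⬝ᵥ (Fᵀ *ᵥ (F *ᵥ x)) = (F *ᵥ x) ⬝ᵥ (F *ᵥ x) := by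
      rw [Matrix.dotProduct_mulVec, Matrix.vecMul_transpose]
    have h3 : (0:ℝ) < x ⬝ᵥ x := by
      have := Matrix.dotProduct_star_self_pos_iff (v := x) |>.mpr hx
      simpa using this
    have h4 : (0:ℝ) ≤ (F *ᵥ x) ⬝ᵥ (F *ᵥ x) := by
      rcases eq_or_ne (F *ᵥ x) 0 with h | h
      · simp [h]
      · have := Matrix.dotProduct_star_self_pos_iff (v := F *ᵥ x) |>.mpr h
        simp only [star_trivial] at this; linarith
    simp only [star_trivial, dotProduct_add, dotProduct_smul, smul_eq_mul, h2]
    nlinarith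

/-- The log-evidence `L(α, β; F, y)` of the Bayesian linear model. -/
noncomputable def logEvidence {ι κ : Type*} [Fintype ι] [Fintype κ] [DecidableEq κ]
    (F : Matrix ι κ ℝ) (y : ι → ℝ) (α β : ℝ) : ℝ :=
  let A := α • (1 : Matrix κ κ ℝ) + β • (Fᵀ * F)
  let m := β • (A⁻¹ *ᵥ (Fᵀ *ᵥ y))
  (Fintype.card ι : ℝ) / 2 * Real.log β + (Fintype.card κ : ℝ) / 2 * Real.log α -
    (Fintype.card ι : ℝ) / 2 * Real.log (2 * Real.pi) -
    β / 2 * ((F *ᵥ m - y) ⬝ᵥ (F *ᵥ m - y)) - α / 2 * (m ⬝ᵥ m) -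
    1 / 2 * Real.log A.det

theorem logEvidence_duplication_invariant (n D q : ℕ) (hq : 0 < q)
    (F : Matrix (Fin n) (Fin D) ℝ) (y : Fin n → ℝ)
    (Ftil : Matrix (Fin n) (Fin q × Fin D) ℝ)
    (hFtil : Ftil = Matrix.of fun i p => F i p.2)
    (α β : ℝ) (hα : 0 < α) (hβ : 0 < β) :
    logEvidence Ftil y ((q : ℝ) * α) β = logEvidence F y α β := by
  have hqR : (0:ℝ) < (q:ℝ) := by exact_mod_cast hq
  have hqa : (0:ℝ) < (q:ℝ) * α := by positivity
  set G : Matrix (Fin n) (Fin q × Fin D) ℝ := Matrix.of fun i p => F i p.2 with hG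
  subst hFtil
  set M : Matrix (Fin D) (Fin D) ℝ := Fᵀ * F with hM
  set A : Matrix (Fin D) (Fin D) ℝ := α • 1 + β • M with hAdef
  set K : Matrix (Fin q × Fin D) (Fin q × Fin D) ℝ := Gᵀ * G with hKdef
  set B : Matrix (Fin q × Fin D) (Fin q × Fin D) ℝ := ((q:ℝ) * α) • 1 + β • K with hBdef
  have hKM : ∀ p p' : Fin q × Fin D, K p p' = M p.2 p'.2 := by
    intro p p'
    simp [hKdef, hM, Matrix.mul_apply, hG]
  -- positive definiteness and invertibility
  have hApd : A.PosDef := aux_posDef F hα hβ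
  have hBpd : B.PosDef := aux_posDef G hqa hβ
  have hAdet : IsUnit A.det := hApd.det_pos.ne'.isUnit
  have hBdet : IsUnit B.det := hBpd.det_pos.ne'.isUnit
  -- the replicated posterior mean
  set w : Fin D → ℝ := Fᵀ *ᵥ y with hw
  set v : Fin D → ℝ := A⁻¹ *ᵥ w with hv
  have hAv : A *ᵥ v = w := by
    rw [hv, Matrix.mulVec_mulVec, Matrix.mul_nonsing_inv _ hAdet, Matrix.one_mulVec]
  have hGty : Gᵀ *ᵥ y = fun p => w p.2 := by
    ext p
    simp [hG, hw, Matrix.mulVec, dotProduct]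
  have hKrep : K *ᵥ (fun p => (q:ℝ)⁻¹ * v p.2) = fun p => (M *ᵥ v) p.2 := by
    ext p
    simp only [Matrix.mulVec, dotProduct, hKM]
    rw [Fintype.sum_prod_type]
    simp only [Finset.sum_const, Finset.card_univ, Fintype.card_fin, nsmul_eq_mul]
    rw [Finset.mul_sum]
    congr 1
    ext j
    field_simp
  have hBrep : B *ᵥ (fun p => (q:ℝ)⁻¹ * v p.2) = fun p => w p.2 := by
    rw [hBdef, Matrix.add_mulVec, Matrix.smul_mulVec, Matrix.smul_mulVec,
      Matrix.one_mulVec, hKrep]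
    ext p
    have := congrFun hAv p.2
    rw [hAdef] at this
    simp only [Matrix.add_mulVec, Matrix.smul_mulVec, Matrix.one_mulVec,
      Pi.add_apply, Pi.smul_apply, smul_eq_mul] at this
    simp only [Pi.add_apply, Pi.smul_apply, smul_eq_mul]
    rw [← this]
    field_simp
  have hBinvrep : B⁻¹ *ᵥ (fun p => w p.2) = fun p => (q:ℝ)⁻¹ * v p.2 := by
    rw [← hBrep, Matrix.mulVec_mulVec, Matrix.nonsing_inv_mul _ hBdet, Matrix.one_mulVec]
  -- the two posterior means
  set m : Fin D → ℝ := β • (A⁻¹ *ᵥ (Fᵀ *ᵥ y)) with hm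
  have hmv : m = fun i => β * v i := by
    ext i; simp [hm, hv, hw]
  set mt : Fin q × Fin D → ℝ := β • (B⁻¹ *ᵥ (Gᵀ *ᵥ y)) with hmt
  have hmtv : mt = fun p => β * ((q:ℝ)⁻¹ * v p.2) := by
    rw [hmt, hGty, hBinvrep]
    ext p; simp
  -- residuals agree
  have hres : G *ᵥ mt = F *ᵥ m := by
    ext i
    rw [hmtv, hmv]
    simp only [Matrix.mulVec, dotProduct, hG, Matrix.of_apply]
    rw [Fintype.sum_prod_type]
    simp only [Finset.sum_const, Finset.card_univ, Fintype.card_fin, nsmul_eq_mul]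
    rw [Finset.mul_sum]
    congr 1
    ext j
    field_simp
  -- prior terms agree
  have hprior : ((q:ℝ) * α) / 2 * (mt ⬝ᵥ mt) = α / 2 * (m ⬝ᵥ m) := by
    rw [hmtv, hmv]
    simp only [dotProduct]
    rw [Fintype.sum_prod_type]
    simp only [Finset.sum_const, Finset.card_univ, Fintype.card_fin, nsmul_eq_mul]
    have hterm : ∀ x : Fin D, β*((q:ℝ)⁻¹*v x)*(β*((q:ℝ)⁻¹*v x))
        = ((q:ℝ)⁻¹*(q:ℝ)⁻¹) * (β*v x*(β*v x)) := fun x => by ring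
    rw [Finset.sum_congr rfl (fun x _ => hterm x), ← Finset.mul_sum]
    field_simp
  -- determinants
  set c : ℝ := (1 + (β/α) • (F * Fᵀ)).det with hc
  have hdetA : A.det = α ^ D * c := by
    have h1 : A = α • ((1 : Matrix (Fin D) (Fin D) ℝ) + (β/α) • M) := by
      rw [smul_add, smul_smul]
      field_simp
      exact hAdef
    rw [h1, Matrix.det_smul, Fintype.card_fin]
    congr 1
    rw [hc, hM]
    have h2 : (β/α) • (Fᵀ * F) = ((β/α) • Fᵀ) * F := by rw [Matrix.smul_mul]
    rw [h2, Matrix.det_one_add_mul_comm, Matrix.mul_smul]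
  have hGGt : G * Gᵀ = (q:ℝ) • (F * Fᵀ) := by
    ext i j
    simp only [Matrix.mul_apply, Matrix.smul_apply, smul_eq_mul, hG, Matrix.transpose_apply,
      Matrix.of_apply]
    rw [Fintype.sum_prod_type]
    simp [Finset.sum_const, Finset.card_univ, mul_comm]
  have hdetB : B.det = ((q:ℝ) * α) ^ (q * D) * c := by
    have h1 : B = ((q:ℝ)*α) • ((1 : Matrix (Fin q × Fin D) (Fin q × Fin D) ℝ)
        + (β/((q:ℝ)*α)) • K) := by
      rw [smul_add, smul_smul]
      field_simp
      exact hBdef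
    rw [h1, Matrix.det_smul]
    have hcard : Fintype.card (Fin q × Fin D) = q * D := by simp
    rw [hcard]
    congr 1
    rw [hc, hKdef]
    have h2 : (β/((q:ℝ)*α)) • (Gᵀ * G) = ((β/((q:ℝ)*α)) • Gᵀ) * G := by rw [Matrix.smul_mul]
    rw [h2, Matrix.det_one_add_mul_comm, Matrix.mul_smul, hGGt, smul_smul,
      show β / ((q:ℝ)*α) * (q:ℝ) = β/α by field_simp]
  have hcpos : 0 < c := by
    have := hApd.det_pos
    rw [hdetA] at this
    have hα' : (0:ℝ) < α ^ D := by positivity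
    nlinarith
  -- log determinant identity
  have hlogdet : (q*D : ℝ)/2 * Real.log ((q:ℝ)*α) - 1/2 * Real.log B.det
      = (D:ℝ)/2 * Real.log α - 1/2 * Real.log A.det := by
    rw [hdetA, hdetB, Real.log_mul (by positivity) hcpos.ne',
      Real.log_mul (by positivity) hcpos.ne', Real.log_pow, Real.log_pow]
    push_cast
    ring
  -- put it all together
  simp only [logEvidence, Fintype.card_fin, Fintype.card_prod]
  rw [← hKdef, ← hBdef, ← hM, ← hAdef, ← hmt, ← hm, hres]
  push_cast at hlogdet ⊢
  linarith [hlogdet, hprior]
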